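/- arXiv:1310.2404 — 2 statements merged into one kernel-verified Lean document; each statement's English description precedes it below -/
import Mathlib

section
/- Let V : ℝᵈ → ℝ be C¹ with ⟨x, ∇V(x)⟩ ≥ β|x|² - κ for all x (β > 0, κ ≥ 0), let δ > 0, p ≥ 1 an integer, and suppose X* ∈ ℝᵈ and X ∈ ℝᵈ satisfy X = X* + δ∇V(X*). Then |X|^{2p} ≥ (1 + 2pδβ)|X*|^{2p} - 2pκδ|X*|^{2(p-1)}. -/
open scoped RealInnerProductSpace

lemma bern_aux (a c : ℝ) (ha : 0 ≤ a) (hac : 0 ≤ a + c) :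
    ∀ m : ℕ, a ^ (m + 1) + (m + 1) * a ^ m * c ≤ (a + c) ^ (m + 1) := by
  intro m
  induction m with
  | zero => simp
  | succ m ih =>
    have h1 : (a + c) ^ (m + 2) = (a + c) * (a + c) ^ (m + 1) := by ring
    have h2 : (a + c) * (a ^ (m + 1) + (m + 1) * a ^ m * c) ≤ (a + c) * (a + c) ^ (m + 1) :=
      mul_le_mul_of_nonneg_left ih hac
    have h3 : a ^ (m + 2) + ((m : ℝ) + 2) * a ^ (m + 1) * c
        ≤ (a + c) * (a ^ (m + 1) + (m + 1) * a ^ m * c) := by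
      rw [show a ^ (m + 2) = a ^ m * a * a from by ring,
        show a ^ (m + 1) = a ^ m * a from by ring]
      nlinarith [mul_nonneg (mul_nonneg (by positivity : (0:ℝ) ≤ (m : ℝ) + 1)
        (pow_nonneg ha m)) (sq_nonneg c)]
    push_cast
    linarith [h3.trans h2]

theorem split_step_moment_lower_bound (d : ℕ) (V : EuclideanSpace ℝ (Fin d) → ℝ)
    (β κ δ : ℝ) (hβ : 0 < β) (hκ : 0 ≤ κ) (hδ : 0 < δ)
    (hV : ContDiff ℝ 1 V)
    (hdiss : ∀ x : EuclideanSpace ℝ (Fin d), ⟪x, gradient V x⟫ ≥ β * ‖x‖ ^ 2 - κ)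
    (p : ℕ) (hp : 1 ≤ p)
    (Xstar X : EuclideanSpace ℝ (Fin d))
    (hX : X = Xstar + δ • gradient V Xstar) :
    ‖X‖ ^ (2 * p) ≥ (1 + 2 * p * δ * β) * ‖Xstar‖ ^ (2 * p)
      - 2 * p * κ * δ * ‖Xstar‖ ^ (2 * (p - 1)) := by
  obtain ⟨m, rfl⟩ : ∃ m, p = m + 1 := ⟨p - 1, (Nat.succ_pred_eq_of_pos hp).symm⟩
  set g := gradient V Xstar with hg
  set a := ‖Xstar‖ ^ 2 with ha
  have ha0 : 0 ≤ a := sq_nonneg _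
  set c := 2 * δ * (β * a - κ) with hc
  have hX2 : ‖X‖ ^ 2 = a + 2 * δ * ⟪Xstar, g⟫ + δ ^ 2 * ‖g‖ ^ 2 := by
    rw [hX, norm_add_sq_real, inner_smul_right, norm_smul]
    simp [abs_of_pos hδ]
    ring
  have hlow : a + c ≤ ‖X‖ ^ 2 := by
    have hd := hdiss Xstar
    rw [← hg, ← ha] at hd
    have h4 : 2 * δ * (β * a - κ) ≤ 2 * δ * ⟪Xstar, g⟫ :=
      mul_le_mul_of_nonneg_left hd (by positivity)
    nlinarith [sq_nonneg (δ * ‖g‖)]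
  have hgoal : ‖X‖ ^ (2 * (m + 1)) = (‖X‖ ^ 2) ^ (m + 1) := by
    rw [← pow_mul]
  have hXs1 : ‖Xstar‖ ^ (2 * (m + 1)) = a ^ (m + 1) := by rw [ha, ← pow_mul]
  have hXs2 : ‖Xstar‖ ^ (2 * (m + 1 - 1)) = a ^ m := by
    simp [ha, ← pow_mul]
  rw [ge_iff_le, hXs1, hXs2, hgoal]
  have key : a ^ (m + 1) + ((m : ℝ) + 1) * a ^ m * c ≤ (‖X‖ ^ 2) ^ (m + 1) := by
    rcases le_or_gt 0 (a + c) with h0 | h0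
    · calc a ^ (m + 1) + ((m : ℝ) + 1) * a ^ m * c ≤ (a + c) ^ (m + 1) :=
            bern_aux a c ha0 h0 m
        _ ≤ (‖X‖ ^ 2) ^ (m + 1) := pow_le_pow_left₀ h0 hlow _
    · have hrhs : a ^ (m + 1) + ((m : ℝ) + 1) * a ^ m * c ≤ 0 := by
        have hca : c < -a := by linarith
        have h1 : ((m : ℝ) + 1) * a ^ m * c ≤ ((m : ℝ) + 1) * a ^ m * (-a) := by
          apply mul_le_mul_of_nonneg_left hca.le
          positivity
        have h2 : a ^ m * a = a ^ (m + 1) := by ring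
        nlinarith [pow_nonneg ha0 (m + 1), Nat.cast_nonneg (α := ℝ) m]
      exact hrhs.trans (by positivity)
  have hexp : (1 + 2 * ((m : ℝ) + 1) * δ * β) * a ^ (m + 1)
      - 2 * ((m : ℝ) + 1) * κ * δ * a ^ m
      = a ^ (m + 1) + ((m : ℝ) + 1) * a ^ m * c := by
    rw [hc]; ring
  push_cast
  rw [hexp]
  exact key
end

section
/- Let V : ℝᵈ → ℝ be C¹ with ⟨x, ∇V(x)⟩ ≥ β|x|² - κ (β > 0), let 0 < δ < 1/α where V is semi-convex with constant α, and let Ψ_δ(x) denote the unique solution y of y = x - δ∇V(y). Then for every ε > 0 and all x, (1 + βδ - ε/2)|Ψ_δ(x)|² ≤ (1/(2ε))|x|² + κδ; in particular |Ψ_δ(x)|² ≤ |x|² + 2κδ, so Ψ_δ has at most linear growth. -/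
open scoped RealInnerProductSpace

/-!
Write `y = Ψ x`, so that `x = y + δ ∇V(y)`. Pairing with `y` and using dissipativity gives
`(1 + βδ)|y|² - κδ ≤ ⟨y, x⟩ ≤ |y| |x|`, and Young's inequality `|y| |x| ≤ (ε/2)|y|² + |x|²/(2ε)`
finishes the first bound; `ε = 1` together with `βδ ≥ 0` gives the second.
-/

theorem mul_le_half_mul_sq_add_div_sq {ε : ℝ} (hε : 0 < ε) (a b : ℝ) :
    a * b ≤ ε / 2 * a ^ 2 + 1 / (2 * ε) * b ^ 2 := by
  have hsplit : ε / 2 * a ^ 2 + 1 / (2 * ε) * b ^ 2 - a * b = (ε * a - b) ^ 2 / (2 * ε) := by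
    field_simp
    ring
  have : 0 ≤ (ε * a - b) ^ 2 / (2 * ε) := by positivity
  linarith

section Resolvent

variable {E : Type*} [NormedAddCommGroup E] [InnerProductSpace ℝ E]

theorem norm_sq_add_smul_inner_eq_inner {x y g : E} {δ : ℝ} (hx : y = x - δ • g) :
    ‖y‖ ^ 2 + δ * ⟪y, g⟫ = ⟪y, x⟫ := by
  rw [← eq_sub_iff_add_eq.mp hx, inner_add_right, real_inner_smul_right,
    real_inner_self_eq_norm_sq]

theorem resolvent_norm_sq_le_of_dissipative {x y g : E} {β κ δ ε : ℝ} (hδ : 0 ≤ δ) (hε : 0 < ε)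
    (hx : y = x - δ • g) (hdiss : ⟪y, g⟫ ≥ β * ‖y‖ ^ 2 - κ) :
    (1 + β * δ - ε / 2) * ‖y‖ ^ 2 ≤ 1 / (2 * ε) * ‖x‖ ^ 2 + κ * δ := by
  have hpair := norm_sq_add_smul_inner_eq_inner hx
  have hcs : ⟪y, x⟫ ≤ ‖y‖ * ‖x‖ := real_inner_le_norm y x
  have hyoung := mul_le_half_mul_sq_add_div_sq hε ‖y‖ ‖x‖
  have hdiss' := mul_le_mul_of_nonneg_left hdiss hδ
  nlinarith

end Resolvent

theorem implicit_resolvent_linear_growth_general (d : ℕ)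
    (V : EuclideanSpace ℝ (Fin d) → ℝ)
    (β κ δ : ℝ) (hβ : 0 < β) (hδ : 0 < δ)
    (hdiss : ∀ x : EuclideanSpace ℝ (Fin d), ⟪x, gradient V x⟫ ≥ β * ‖x‖ ^ 2 - κ)
    (Ψ : EuclideanSpace ℝ (Fin d) → EuclideanSpace ℝ (Fin d))
    (hΨ : ∀ x, Ψ x = x - δ • gradient V (Ψ x)) :
    (∀ ε : ℝ, 0 < ε → ∀ x,
      (1 + β * δ - ε / 2) * ‖Ψ x‖ ^ 2 ≤ (1 / (2 * ε)) * ‖x‖ ^ 2 + κ * δ) ∧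
    (∀ x, ‖Ψ x‖ ^ 2 ≤ ‖x‖ ^ 2 + 2 * κ * δ) := by
  have hbound : ∀ ε : ℝ, 0 < ε → ∀ x,
      (1 + β * δ - ε / 2) * ‖Ψ x‖ ^ 2 ≤ (1 / (2 * ε)) * ‖x‖ ^ 2 + κ * δ := fun ε hε x =>
    resolvent_norm_sq_le_of_dissipative hδ.le hε (hΨ x) (hdiss (Ψ x))
  refine ⟨hbound, fun x => ?_⟩
  have hone := hbound 1 one_pos x
  have hβδ : 0 ≤ β * δ * ‖Ψ x‖ ^ 2 := by positivity
  linarith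

theorem implicit_resolvent_linear_growth (d : ℕ)
    (V : EuclideanSpace ℝ (Fin d) → ℝ)
    (α β κ δ : ℝ) (hα : 0 < α) (hβ : 0 < β) (hδ : 0 < δ) (hδα : δ < 1 / α)
    (hV : ContDiff ℝ 2 V)
    (hsemi : ∀ x h : EuclideanSpace ℝ (Fin d),
      fderiv ℝ (fderiv ℝ V) x h h ≥ -α * ‖h‖ ^ 2)
    (hdiss : ∀ x : EuclideanSpace ℝ (Fin d), ⟪x, gradient V x⟫ ≥ β * ‖x‖ ^ 2 - κ)
    (Ψ : EuclideanSpace ℝ (Fin d) → EuclideanSpace ℝ (Fin d))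
    (hΨ : ∀ x, Ψ x = x - δ • gradient V (Ψ x)) :
    (∀ ε : ℝ, 0 < ε → ∀ x,
      (1 + β * δ - ε / 2) * ‖Ψ x‖ ^ 2 ≤ (1 / (2 * ε)) * ‖x‖ ^ 2 + κ * δ) ∧
    (∀ x, ‖Ψ x‖ ^ 2 ≤ ‖x‖ ^ 2 + 2 * κ * δ) :=
  implicit_resolvent_linear_growth_general d V β κ δ hβ hδ hdiss Ψ hΨ
end
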